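/- arXiv:2201.12163 — 3 statements merged into one kernel-verified Lean document; each statement's English description precedes it below -/
import Mathlib

section
/- Let $f: V \to W$ be an infinitely Fréchet-differentiable map between Banach spaces. Then $f$ is entire if and only if for every compact subset $K \subset V$, $\lim_{k \to \infty} \sup_{v \in K} \left(\frac{\|D^k f(v)\|}{k!}\right)^{1/k} = 0$, where $D^k f(v)$ denotes the $k$-th Fréchet derivative of $f$ at $v$. -/
open Filter

section EntireHelpers

universe u w

variable {V : Type u} [NormedAddCommGroup V] [NormedSpace ℝ V]

/-- Super-exponential decay of `k`-th roots gives geometric domination. -/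
private lemma root_decay_bound {c : ℕ → ℝ} (hc : ∀ k, 0 ≤ c k)
    (h : Tendsto (fun k : ℕ => (c k) ^ (1 / (k : ℝ))) atTop (nhds 0)) {ε : ℝ} (hε : 0 < ε) :
    ∃ C : ℝ, 1 ≤ C ∧ ∀ k, c k ≤ C * ε ^ k := by
  have hev : ∀ᶠ k : ℕ in atTop, (c k) ^ (1 / (k : ℝ)) < ε := h.eventually (gt_mem_nhds hε)
  obtain ⟨N, hN⟩ := eventually_atTop.1 hev
  set M := max N 1 with hM
  refine ⟨1 + ∑ n ∈ Finset.range M, c n / ε ^ n, ?_, ?_⟩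
  · have : 0 ≤ ∑ n ∈ Finset.range M, c n / ε ^ n :=
      Finset.sum_nonneg fun i _ => div_nonneg (hc i) (pow_nonneg hε.le i)
    linarith
  · intro k
    by_cases hk : k < M
    · have h1 : c k / ε ^ k ≤ ∑ n ∈ Finset.range M, c n / ε ^ n :=
        Finset.single_le_sum (fun i _ => div_nonneg (hc i) (pow_nonneg hε.le i))
          (Finset.mem_range.2 hk)
      have h2 : c k = (c k / ε ^ k) * ε ^ k := by
        field_simp
      rw [h2]
      have hp : (0:ℝ) < ε ^ k := pow_pos hε k
      nlinarith [hc k, h1, hp]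
    · push_neg at hk
      have hk1 : 1 ≤ k := le_trans (le_max_right N 1) hk
      have hkN : N ≤ k := le_trans (le_max_left N 1) hk
      have h1 : (c k) ^ (1 / (k : ℝ)) < ε := hN k hkN
      have h2 : c k ≤ ε ^ k := by
        have h3 : c k = ((c k) ^ ((k : ℝ)⁻¹)) ^ k := by
          rw [Real.rpow_inv_natCast_pow (hc k) (by omega)]
        rw [h3]
        apply pow_le_pow_left₀ (Real.rpow_nonneg (hc k) _)
        rw [← one_div]
        exact h1.le
      have hC : (0:ℝ) ≤ ∑ n ∈ Finset.range M, c n / ε ^ n :=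
        Finset.sum_nonneg fun i _ => div_nonneg (hc i) (pow_nonneg hε.le i)
      have hp : (0:ℝ) ≤ ε ^ k := (pow_pos hε k).le
      nlinarith

/-- Norm bound on the derivative series. -/
private lemma norm_derivSeries_le {W' : Type w} [NormedAddCommGroup W'] [NormedSpace ℝ W']
    (p : FormalMultilinearSeries ℝ V W') (n : ℕ) :
    ‖p.derivSeries n‖ ≤ (n + 1) * ‖p (n + 1)‖ := by
  have hcard : Fintype.card { s : Finset (Fin (1 + n)) // s.card = n } = n + 1 := by
    rw [Fintype.card_subtype, ← Finset.powerset_univ, ← Finset.powersetCard_eq_filter,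
      Finset.card_powersetCard, Finset.card_univ, Fintype.card_fin, add_comm 1 n,
      Nat.choose_succ_self_right]
  have h1 : ‖p.changeOriginSeries 1 n‖ ≤ (n + 1) * ‖p (1 + n)‖ := by
    have h := p.nnnorm_changeOriginSeries_le_tsum 1 n
    rw [tsum_fintype] at h
    simp only [Finset.sum_const, Finset.card_univ, hcard] at h
    have := (NNReal.coe_le_coe).2 h
    push_cast at this
    simpa [Finset.card_univ] using this
  have h2 : ∀ m : Fin n → V, ‖p.derivSeries n m‖ ≤ ‖p.changeOriginSeries 1 n‖ * ∏ i, ‖m i‖ := by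
    intro m
    have : ‖p.derivSeries n m‖ = ‖p.changeOriginSeries 1 n m‖ := by
      simp only [FormalMultilinearSeries.derivSeries,
        ContinuousLinearMap.compFormalMultilinearSeries_apply,
        ContinuousLinearMap.compContinuousMultilinearMap_coe, Function.comp_apply,
        ContinuousLinearEquiv.coe_coe, LinearIsometryEquiv.coe_coe]
      exact LinearIsometryEquiv.norm_map _ _
    rw [this]
    exact (p.changeOriginSeries 1 n).le_opNorm m
  have h3 : ‖p.derivSeries n‖ ≤ ‖p.changeOriginSeries 1 n‖ :=
    ContinuousMultilinearMap.opNorm_le_bound (norm_nonneg (p.changeOriginSeries 1 n)) h2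
  refine h3.trans ?_
  rw [add_comm 1 n] at h1
  exact h1

/-- Bound for the sum of a power series with factorially growing coefficients. -/
private lemma aux0 {W' : Type w} [NormedAddCommGroup W'] [NormedSpace ℝ W']
    {g : V → W'} {q : FormalMultilinearSeries ℝ V W'}
    (hg : HasFPowerSeriesOnBall g q 0 ⊤) (j : ℕ) {C ε : ℝ} (hC : 0 ≤ C) (hε : 0 ≤ ε)
    (hq : ∀ n, ‖q n‖ ≤ C * (n + j).descFactorial j * ε ^ (n + j))
    {v : V} (hv : ε * ‖v‖ ≤ 1 / 4) :
    ‖g v‖ ≤ 2 * (C * j.factorial * (2 * ε) ^ j) := by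
  have hs : HasSum (fun n => q n fun _ => v) (g v) := by
    have := hg.hasSum (y := v) (by simp)
    simpa using this
  set D := C * j.factorial * (2 * ε) ^ j with hD
  have hD0 : 0 ≤ D := by positivity
  have key : ∀ n, ‖q n fun _ => v‖ ≤ D * (1 / 2) ^ n := by
    intro n
    have h1 : ‖q n fun _ => v‖ ≤ ‖q n‖ * ‖v‖ ^ n := by
      simpa [Finset.prod_const] using (q n).le_opNorm fun _ => v
    have hch : ((n + j).descFactorial j : ℝ) ≤ (j.factorial : ℝ) * 2 ^ (n + j) := by
      have hnat : (n + j).descFactorial j ≤ j.factorial * 2 ^ (n + j) := by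
        rw [Nat.descFactorial_eq_factorial_mul_choose]
        refine Nat.mul_le_mul_left _ ?_
        have h4 : (n + j).choose j ≤ ∑ m ∈ Finset.range (n + j + 1), (n + j).choose m :=
          Finset.single_le_sum (fun i _ => Nat.zero_le _) (Finset.mem_range.2 (by omega))
        rwa [Nat.sum_range_choose] at h4
      exact_mod_cast hnat
    have h5 : ‖q n‖ * ‖v‖ ^ n ≤ (C * ((n + j).descFactorial j) * ε ^ (n + j)) * ‖v‖ ^ n :=
      mul_le_mul_of_nonneg_right (hq n) (by positivity)
    have h6 : (C * ((n + j).descFactorial j : ℝ) * ε ^ (n + j)) * ‖v‖ ^ n ≤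
        (C * ((j.factorial : ℝ) * 2 ^ (n + j)) * ε ^ (n + j)) * ‖v‖ ^ n := by
      gcongr
    have h7 : (C * ((j.factorial : ℝ) * 2 ^ (n + j)) * ε ^ (n + j)) * ‖v‖ ^ n =
        D * (2 * ε * ‖v‖) ^ n := by
      rw [hD]; ring
    have h8 : D * (2 * ε * ‖v‖) ^ n ≤ D * (1 / 2) ^ n := by
      have : (2 * ε * ‖v‖) ^ n ≤ (1 / 2) ^ n := by
        apply pow_le_pow_left₀ (by positivity)
        nlinarith [norm_nonneg v]
      exact mul_le_mul_of_nonneg_left this hD0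
    calc ‖q n fun _ => v‖ ≤ ‖q n‖ * ‖v‖ ^ n := h1
      _ ≤ _ := h5
      _ ≤ _ := h6
      _ = _ := h7
      _ ≤ _ := h8
  calc ‖g v‖ = ‖∑' n, q n fun _ => v‖ := by rw [hs.tsum_eq]
    _ ≤ D * 2 := tsum_of_norm_bounded (hasSum_geometric_two.mul_left D) key
    _ = 2 * D := mul_comm _ _

/-- One derivative step for the coefficient bounds. -/
private lemma deriv_step {W' : Type w} [NormedAddCommGroup W'] [NormedSpace ℝ W']
    {q : FormalMultilinearSeries ℝ V W'} {C ε : ℝ} (hC : 0 ≤ C) (hε : 0 ≤ ε) (j : ℕ)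
    (hq : ∀ n, ‖q n‖ ≤ C * (n + j).descFactorial j * ε ^ (n + j)) :
    ∀ n, ‖q.derivSeries n‖ ≤ C * ((n + (j + 1)).descFactorial (j + 1)) * ε ^ (n + (j + 1)) := by
  intro n
  have hnat : (n + (j + 1)).descFactorial (j + 1) = (n + 1) * ((n + 1 + j).descFactorial j) := by
    rw [show n + (j + 1) = (n + 1) + j by omega, Nat.descFactorial_succ, Nat.add_sub_cancel]
  have h1 : ‖q.derivSeries n‖ ≤ (n + 1) * ‖q (n + 1)‖ := norm_derivSeries_le q n
  have h2 : ((n:ℝ) + 1) * ‖q (n + 1)‖ ≤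
      ((n:ℝ) + 1) * (C * ((n + 1 + j).descFactorial j) * ε ^ (n + 1 + j)) := by
    have := hq (n + 1)
    refine mul_le_mul_of_nonneg_left ?_ (by positivity)
    exact_mod_cast this
  refine (by exact_mod_cast h1 : ‖q.derivSeries n‖ ≤ ((n:ℝ)+1) * ‖q (n+1)‖).trans (h2.trans ?_)
  rw [hnat]
  have hexp : n + (j + 1) = n + 1 + j := by omega
  rw [hexp]
  push_cast
  ring_nf
  exact le_refl _

/-- Iterated derivative bounds for entire power series (auxiliary, universe-restricted). -/
private lemma aux2' : ∀ (k : ℕ) {W' : Type (max u w)} [NormedAddCommGroup W'] [NormedSpace ℝ W']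
    [CompleteSpace W'] (g : V → W') (q : FormalMultilinearSeries ℝ V W'),
    HasFPowerSeriesOnBall g q 0 ⊤ →
    ∀ (j : ℕ) (C ε : ℝ), 0 ≤ C → 0 ≤ ε →
    (∀ n, ‖q n‖ ≤ C * (n + j).descFactorial j * ε ^ (n + j)) →
    ∀ (v : V), ε * ‖v‖ ≤ 1 / 4 →
    ‖iteratedFDeriv ℝ k g v‖ ≤ 2 * (C * (k + j).factorial * (2 * ε) ^ (k + j)) := by
  intro k
  induction k with
  | zero =>
    intro W' _ _ _ g q hg j C ε hC hε hq v hv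
    simpa using aux0 hg j hC hε hq hv
  | succ k ih =>
    intro W' _ _ _ g q hg j C ε hC hε hq v hv
    rw [← norm_iteratedFDeriv_fderiv]
    have h := ih (fderiv ℝ g) q.derivSeries hg.fderiv (j + 1) C ε hC hε
      (deriv_step hC hε j hq) v hv
    have e : k + 1 + j = k + (j + 1) := by omega
    rw [e]
    exact h

/-- Iterated derivative bounds for entire power series. -/
private lemma aux2 {W' : Type w} [NormedAddCommGroup W'] [NormedSpace ℝ W'] [CompleteSpace W']
    {g : V → W'} {q : FormalMultilinearSeries ℝ V W'}
    (hg : HasFPowerSeriesOnBall g q 0 ⊤) {C ε : ℝ} (hC : 0 ≤ C) (hε : 0 ≤ ε)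
    (hq : ∀ n, ‖q n‖ ≤ C * ε ^ n) (k : ℕ) {v : V} (hv : ε * ‖v‖ ≤ 1 / 4) :
    ‖iteratedFDeriv ℝ k g v‖ ≤ 2 * (C * k.factorial * (2 * ε) ^ k) := by
  have hq0 : ∀ n, ‖q n‖ ≤ C * ((n + 0).descFactorial 0) * ε ^ (n + 0) := by
    intro n; simpa using hq n
  cases k with
  | zero => simpa using aux0 hg 0 hC hε hq0 hv
  | succ k =>
    rw [← norm_iteratedFDeriv_fderiv]
    have h := aux2' k (fderiv ℝ g) q.derivSeries hg.fderiv 1 C ε hC hε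
      (deriv_step hC hε 0 hq0) v hv
    simpa using h

end EntireHelpers

section SymHelpers

variable {V W : Type*} [NormedAddCommGroup V] [NormedSpace ℝ V]
  [NormedAddCommGroup W] [NormedSpace ℝ W]

/-- Symmetrization of a continuous multilinear map. -/
private noncomputable def symmetrize {k : ℕ}
    (m : ContinuousMultilinearMap ℝ (fun _ : Fin k => V) W) :
    ContinuousMultilinearMap ℝ (fun _ : Fin k => V) W :=
  (k.factorial : ℝ)⁻¹ • ∑ σ : Equiv.Perm (Fin k), m.domDomCongr σ

private lemma symmetrize_apply_perm {k : ℕ}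
    (m : ContinuousMultilinearMap ℝ (fun _ : Fin k => V) W)
    (σ : Equiv.Perm (Fin k)) (v : Fin k → V) :
    symmetrize m (v ∘ σ) = symmetrize m v := by
  simp only [symmetrize, ContinuousMultilinearMap.smul_apply,
    ContinuousMultilinearMap.sum_apply, ContinuousMultilinearMap.domDomCongr_apply]
  congr 1
  calc ∑ τ : Equiv.Perm (Fin k), m (fun i => (v ∘ σ) (τ i))
      = ∑ τ : Equiv.Perm (Fin k), m (fun i => v ((σ * τ) i)) := by
        refine Finset.sum_congr rfl fun τ _ => ?_
        simp [Equiv.Perm.mul_apply, Function.comp]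
    _ = ∑ τ : Equiv.Perm (Fin k), m (fun i => v (τ i)) :=
        Equiv.sum_comp (Equiv.mulLeft σ) (fun τ => m (fun i => v (τ i)))

private lemma symmetrize_apply_diag {k : ℕ}
    (m : ContinuousMultilinearMap ℝ (fun _ : Fin k => V) W)
    (v : V) : symmetrize m (fun _ => v) = m (fun _ => v) := by
  simp only [symmetrize, ContinuousMultilinearMap.smul_apply,
    ContinuousMultilinearMap.sum_apply, ContinuousMultilinearMap.domDomCongr_apply]
  rw [Finset.sum_const, Finset.card_univ, Fintype.card_perm, Fintype.card_fin,
    ← Nat.cast_smul_eq_nsmul ℝ, smul_smul, inv_mul_cancel₀ (by exact_mod_cast k.factorial_ne_zero),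
    one_smul]

private lemma norm_symmetrize_le {k : ℕ}
    (m : ContinuousMultilinearMap ℝ (fun _ : Fin k => V) W) :
    ‖symmetrize m‖ ≤ ‖m‖ := by
  apply ContinuousMultilinearMap.opNorm_le_bound (norm_nonneg m)
  intro v
  simp only [symmetrize, ContinuousMultilinearMap.smul_apply, ContinuousMultilinearMap.sum_apply,
    norm_smul, Real.norm_eq_abs]
  have h1 : ‖∑ σ : Equiv.Perm (Fin k), (m.domDomCongr σ) v‖ ≤
      (k.factorial : ℝ) * (‖m‖ * ∏ i, ‖v i‖) := by
    refine (norm_sum_le _ _).trans ?_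
    have h2 : ∀ σ : Equiv.Perm (Fin k), ‖(m.domDomCongr σ) v‖ ≤ ‖m‖ * ∏ i, ‖v i‖ := by
      intro σ
      rw [ContinuousMultilinearMap.domDomCongr_apply]
      refine (m.le_opNorm _).trans ?_
      rw [Equiv.prod_comp σ (fun i => ‖v i‖)]
    refine (Finset.sum_le_sum fun σ _ => h2 σ).trans ?_
    rw [Finset.sum_const, Finset.card_univ, Fintype.card_perm, Fintype.card_fin, nsmul_eq_mul]
  have hknn : (0:ℝ) < (k.factorial : ℝ) := by exact_mod_cast k.factorial_pos
  rw [abs_of_nonneg (by positivity)]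
  calc (k.factorial : ℝ)⁻¹ * ‖∑ σ : Equiv.Perm (Fin k), (m.domDomCongr σ) v‖
      ≤ (k.factorial : ℝ)⁻¹ * ((k.factorial : ℝ) * (‖m‖ * ∏ i, ‖v i‖)) :=
        mul_le_mul_of_nonneg_left h1 (by positivity)
    _ = ‖m‖ * ∏ i, ‖v i‖ := by field_simp

private lemma norm_inv_fact_smul_le {k : ℕ}
    (m : ContinuousMultilinearMap ℝ (fun _ : Fin k => V) W) :
    ‖(k.factorial : ℝ)⁻¹ • m‖ ≤ ‖m‖ / (k.factorial : ℝ) := by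
  have h := ContinuousMultilinearMap.opNorm_smul_le (𝕜 := ℝ) (𝕜' := ℝ)
    ((k.factorial : ℝ)⁻¹) m
  have h2 : ‖(k.factorial : ℝ)⁻¹‖ = (k.factorial : ℝ)⁻¹ := by
    rw [Real.norm_eq_abs, abs_of_nonneg (by positivity)]
  rw [h2, inv_mul_eq_div] at h
  exact h

/-- The Taylor series of `f` at `0` converges to `f v`, given the Gevrey condition. -/
private lemma taylor_conv (f : V → W) (hf : ContDiff ℝ (⊤ : ℕ∞) f)
    (H : ∀ K : Set V, IsCompact K →
      Tendsto (fun k : ℕ =>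
          sSup ((fun v => (‖iteratedFDeriv ℝ k f v‖ / (k.factorial : ℝ)) ^ (1 / (k : ℝ))) '' K))
        atTop (nhds 0)) (v : V) :
    Tendsto (fun n => ∑ k ∈ Finset.range n,
      ((k.factorial : ℝ)⁻¹ • iteratedFDeriv ℝ k f 0) (fun _ => v)) atTop (nhds (f v)) := by
  classical
  set g : ℕ → W := fun k => ((k.factorial : ℝ)⁻¹ • iteratedFDeriv ℝ k f 0) (fun _ => v) with hg
  set L : ℝ →L[ℝ] V := ContinuousLinearMap.toSpanSingleton ℝ v with hL
  set Kv : Set V := (fun t : ℝ => t • v) '' Set.Icc 0 1 with hKv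
  have hKvc : IsCompact Kv := isCompact_Icc.image (continuous_id.smul continuous_const)
  set B : ℕ → ℝ := fun m =>
    sSup ((fun u => (‖iteratedFDeriv ℝ m f u‖ / (m.factorial : ℝ)) ^ (1 / (m : ℝ))) '' Kv) with hB
  have HB : Tendsto B atTop (nhds 0) := H Kv hKvc
  have hB0 : ∀ m, 0 ≤ B m := by
    intro m
    apply Real.sSup_nonneg
    rintro x ⟨u, hu, rfl⟩
    positivity
  have hh : ContDiff ℝ (⊤ : ℕ∞) (f ∘ ⇑L) := hf.comp L.contDiff
  have hIcc : UniqueDiffOn ℝ (Set.Icc (0:ℝ) 1) := uniqueDiffOn_Icc zero_lt_one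
  have hWithin : ∀ (m : ℕ) (t : ℝ), t ∈ Set.Icc (0:ℝ) 1 →
      iteratedDerivWithin m (f ∘ ⇑L) (Set.Icc 0 1) t
        = iteratedFDeriv ℝ m f (t • v) (fun _ => v) := by
    intro m t ht
    rw [iteratedDerivWithin_eq_iteratedFDerivWithin]
    have h1 : iteratedFDerivWithin ℝ m (f ∘ ⇑L) (Set.Icc 0 1) t
        = iteratedFDeriv ℝ m (f ∘ ⇑L) t := by
      have hT : HasFTaylorSeriesUpTo (⊤ : ℕ∞) (f ∘ ⇑L) (ftaylorSeries ℝ (f ∘ ⇑L)) :=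
        contDiff_iff_ftaylorSeries.mp (hh.of_le (by simp))
      have h2 := ((hasFTaylorSeriesUpToOn_univ_iff.mpr hT).mono
        (Set.subset_univ (Set.Icc 0 1))).eq_iteratedFDerivWithin_of_uniqueDiffOn
        (m := m) (by exact_mod_cast (le_top : (m:ℕ∞) ≤ ⊤)) hIcc ht
      rw [← h2]
      rfl
    rw [h1, ContinuousLinearMap.iteratedFDeriv_comp_right L hf t (by exact_mod_cast le_top)]
    simp [hL, ContinuousMultilinearMap.compContinuousLinearMap_apply,
      ContinuousLinearMap.toSpanSingleton_apply]
  have hBdd : ∀ m : ℕ, BddAbove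
      ((fun u => (‖iteratedFDeriv ℝ m f u‖ / (m.factorial : ℝ)) ^ (1 / (m : ℝ))) '' Kv) := by
    intro m
    refine (hKvc.image ?_).bddAbove
    exact ((hf.continuous_iteratedFDeriv (by exact_mod_cast le_top)).norm.div_const _).rpow_const
      (fun u => Or.inr (by positivity))
  have hBle : ∀ m : ℕ, 1 ≤ m → ∀ u ∈ Kv,
      ‖iteratedFDeriv ℝ m f u‖ ≤ (m.factorial : ℝ) * (B m) ^ m := by
    intro m hm u hu
    have h1 : (‖iteratedFDeriv ℝ m f u‖ / (m.factorial : ℝ)) ^ (1 / (m : ℝ)) ≤ B m :=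
      le_csSup (hBdd m) (Set.mem_image_of_mem _ hu)
    have h3 : 0 ≤ ‖iteratedFDeriv ℝ m f u‖ / (m.factorial : ℝ) := by positivity
    have h2 : ‖iteratedFDeriv ℝ m f u‖ / (m.factorial : ℝ) ≤ (B m) ^ m := by
      calc ‖iteratedFDeriv ℝ m f u‖ / (m.factorial : ℝ)
          = ((‖iteratedFDeriv ℝ m f u‖ / (m.factorial : ℝ)) ^ ((m : ℝ)⁻¹)) ^ m := by
            rw [Real.rpow_inv_natCast_pow h3 (by omega)]
        _ ≤ (B m) ^ m := by
            apply pow_le_pow_left₀ (Real.rpow_nonneg h3 _)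
            rw [← one_div]; exact h1
    have hfacpos : (0:ℝ) < (m.factorial : ℝ) := by exact_mod_cast m.factorial_pos
    rw [div_le_iff₀ hfacpos] at h2
    linarith [h2]
  have hrem : ∀ n : ℕ, ‖f v - ∑ k ∈ Finset.range (n + 1), g k‖ ≤
      ((n : ℝ) + 1) * (B (n + 1) * ‖v‖) ^ (n + 1) := by
    intro n
    have hfC : ContDiffOn ℝ ((n : ℕ∞) + 1) (f ∘ ⇑L) (Set.Icc (0:ℝ) 1) :=
      (hh.of_le (by exact_mod_cast le_top)).contDiffOn
    have hC' : ∀ y ∈ Set.Icc (0:ℝ) 1, ‖iteratedDerivWithin (n + 1) (f ∘ ⇑L) (Set.Icc 0 1) y‖ ≤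
        ((n+1).factorial : ℝ) * (B (n+1)) ^ (n+1) * ‖v‖ ^ (n+1) := by
      intro y hy
      rw [hWithin (n + 1) y hy]
      have h1 : ‖iteratedFDeriv ℝ (n+1) f (y • v) (fun _ => v)‖ ≤
          ‖iteratedFDeriv ℝ (n+1) f (y • v)‖ * ‖v‖ ^ (n+1) := by
        simpa [Finset.prod_const] using (iteratedFDeriv ℝ (n+1) f (y • v)).le_opNorm fun _ => v
      refine h1.trans ?_
      have h2 : y • v ∈ Kv := ⟨y, hy, rfl⟩
      exact mul_le_mul_of_nonneg_right (hBle (n+1) (by omega) _ h2) (by positivity)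
    have htb := taylor_mean_remainder_bound (by norm_num : (0:ℝ) ≤ 1) hfC
      (Set.right_mem_Icc.mpr (by norm_num)) hC'
    have hTay : taylorWithinEval (f ∘ ⇑L) n (Set.Icc 0 1) 0 1 = ∑ k ∈ Finset.range (n+1), g k := by
      rw [taylor_within_apply]
      refine Finset.sum_congr rfl fun k hk => ?_
      rw [hWithin k 0 (Set.left_mem_Icc.mpr (by norm_num))]
      simp [hg, zero_smul]
    have hfv : (f ∘ ⇑L) 1 = f v := by
      simp [hL, ContinuousLinearMap.toSpanSingleton_apply]
    rw [hTay, hfv] at htb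
    refine htb.trans ?_
    have hfacpos : (0:ℝ) < (n.factorial : ℝ) := by exact_mod_cast n.factorial_pos
    rw [div_le_iff₀ hfacpos]
    have hfs : ((n+1).factorial : ℝ) = ((n:ℝ)+1) * (n.factorial : ℝ) := by
      rw [Nat.factorial_succ]; push_cast; ring
    rw [hfs, mul_pow]
    ring_nf
    nlinarith [hB0 (n+1), norm_nonneg v, pow_nonneg (mul_nonneg (hB0 (n+1)) (norm_nonneg v)) (n+1),
      pow_nonneg (hB0 (n+1)) (n+1), pow_nonneg (norm_nonneg v) (n+1)]
  have hr : Tendsto (fun n : ℕ => B (n + 1) * ‖v‖) atTop (nhds 0) := by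
    have h1 := ((tendsto_add_atTop_iff_nat 1).mpr HB).mul_const ‖v‖
    simpa using h1
  have hrev : ∀ᶠ n in atTop, B (n + 1) * ‖v‖ ≤ 1 / 2 :=
    hr.eventually (eventually_le_nhds (by norm_num))
  have hsumm : Summable (fun n : ℕ => ((n : ℝ) + 1) * (1/2 : ℝ) ^ (n + 1)) := by
    have h1 : Summable (fun n : ℕ => (n : ℝ) ^ 1 * (1/2 : ℝ) ^ n) :=
      summable_pow_mul_geometric_of_norm_lt_one 1
        (by rw [Real.norm_eq_abs, abs_of_pos (by norm_num : (0:ℝ) < 1/2)]; norm_num)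
    have h2 := (summable_nat_add_iff 1).mpr h1
    refine h2.congr fun n => ?_
    push_cast
    ring
  have hmaj0 : Tendsto (fun n : ℕ => ((n : ℝ) + 1) * (1/2 : ℝ) ^ (n + 1)) atTop (nhds 0) :=
    hsumm.tendsto_atTop_zero
  have hps1 : Tendsto (fun n => ‖f v - ∑ k ∈ Finset.range (n + 1), g k‖) atTop (nhds 0) := by
    apply squeeze_zero' (Eventually.of_forall fun n => norm_nonneg _) ?_ hmaj0
    filter_upwards [hrev] with n hn
    refine (hrem n).trans ?_
    have h0r : 0 ≤ B (n + 1) * ‖v‖ := mul_nonneg (hB0 _) (norm_nonneg _)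
    exact mul_le_mul_of_nonneg_left (pow_le_pow_left₀ h0r hn _) (by positivity)
  have hps2 : Tendsto (fun n => ∑ k ∈ Finset.range (n + 1), g k) atTop (nhds (f v)) := by
    rw [tendsto_iff_norm_sub_tendsto_zero]
    simpa only [norm_sub_rev] using hps1
  exact (tendsto_add_atTop_iff_nat 1).mp hps2

end SymHelpers

/-- A function between real Banach spaces is *entire* if it admits an
everywhere-convergent power-series expansion with symmetric bounded multilinear
coefficients whose norms decay super-exponentially. -/
def IsEntire {V W : Type*} [NormedAddCommGroup V] [NormedSpace ℝ V]
    [NormedAddCommGroup W] [NormedSpace ℝ W] (f : V → W) : Prop :=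
  ∃ a : (k : ℕ) → ContinuousMultilinearMap ℝ (fun _ : Fin k => V) W,
    (∀ (k : ℕ) (σ : Equiv.Perm (Fin k)) (v : Fin k → V), a k (v ∘ σ) = a k v) ∧
    (∀ v : V, HasSum (fun k => a k fun _ => v) (f v)) ∧
    Tendsto (fun k : ℕ => ‖a k‖ ^ (1 / (k : ℝ))) atTop (nhds 0)

/-- An infinitely Fréchet-differentiable map between Banach spaces is entire
if and only if `sup_{v ∈ K} (‖D^k f(v)‖ / k!)^(1/k) → 0` for every compact `K`. -/
theorem isEntire_iff_gevrey {V W : Type*} [NormedAddCommGroup V] [NormedSpace ℝ V]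
    [NormedAddCommGroup W] [NormedSpace ℝ W]
    (f : V → W) (hf : ContDiff ℝ (⊤ : ℕ∞) f) :
    IsEntire f ↔ ∀ K : Set V, IsCompact K →
      Tendsto (fun k : ℕ =>
          sSup ((fun v => (‖iteratedFDeriv ℝ k f v‖ / (k.factorial : ℝ)) ^ (1 / (k : ℝ))) '' K))
        atTop (nhds 0) := by
  classical
  constructor
  · rintro ⟨a, -, hsum, hdecay⟩ K hK
    obtain ⟨R, hR0, hR⟩ : ∃ R : ℝ, 0 ≤ R ∧ ∀ v ∈ K, ‖v‖ ≤ R := by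
      obtain ⟨R, hR⟩ := (hK.image continuous_norm).bddAbove
      exact ⟨max R 0, le_max_right _ _, fun v hv =>
        le_trans (hR (Set.mem_image_of_mem _ hv)) (le_max_left _ _)⟩
    set ι : W →ₗᵢ[ℝ] UniformSpace.Completion W := UniformSpace.Completion.toComplₗᵢ with hι
    set fh : V → UniformSpace.Completion W := ⇑ι ∘ f with hfh
    set p : FormalMultilinearSeries ℝ V (UniformSpace.Completion W) :=
      fun n => ι.toContinuousLinearMap.compContinuousMultilinearMap (a n) with hp
    have hnormp : ∀ n, ‖p n‖ ≤ ‖a n‖ := by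
      intro n
      apply ContinuousMultilinearMap.opNorm_le_bound (norm_nonneg (a n))
      intro m
      have : ‖p n m‖ = ‖a n m‖ := ι.norm_map _
      rw [this]
      exact (a n).le_opNorm m
    have hps : HasFPowerSeriesOnBall fh p 0 ⊤ := by
      refine ⟨?_, by simp, ?_⟩
      · refine le_of_eq (p.radius_eq_top_of_summable_norm ?_).symm
        intro r
        obtain ⟨C, hC1, hCb⟩ := root_decay_bound (fun n => norm_nonneg (a n)) hdecay
          (ε := 1 / (2 * ((r : ℝ) + 1))) (by positivity)
        have hgeo : Summable (fun n : ℕ => C * (1/2:ℝ) ^ n) :=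
          (summable_geometric_of_lt_one (by norm_num : (0:ℝ) ≤ 1/2) (by norm_num)).mul_left C
        refine Summable.of_nonneg_of_le (fun n => by positivity) (fun n => ?_) hgeo
        calc ‖p n‖ * (r : ℝ) ^ n ≤ (C * (1 / (2 * ((r:ℝ) + 1))) ^ n) * (r:ℝ) ^ n := by
              refine mul_le_mul_of_nonneg_right ((hnormp n).trans (hCb n)) (by positivity)
          _ = C * (((r:ℝ) / (2 * ((r:ℝ) + 1))) ^ n) := by
              rw [mul_assoc, ← mul_pow]; ring_nf
          _ ≤ C * ((1/2) ^ n) := by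
              refine mul_le_mul_of_nonneg_left (pow_le_pow_left₀ (by positivity) ?_ n) (by linarith)
              rw [div_le_div_iff₀ (by positivity) (by norm_num)]
              nlinarith [r.coe_nonneg]
      · intro y _
        have h := (hsum y).mapL ι.toContinuousLinearMap
        simpa [hp, hfh, zero_add] using h
    rw [NormedAddCommGroup.tendsto_nhds_zero]
    intro δ hδ
    set ε₀ : ℝ := min (δ / 8) (1 / (4 * (R + 1))) with hε₀
    have hε₀pos : 0 < ε₀ := lt_min (by linarith) (by positivity)
    obtain ⟨C, hC1, hCb⟩ := root_decay_bound (fun n => norm_nonneg (a n)) hdecay hε₀pos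
    have hqb : ∀ n, ‖p n‖ ≤ C * ε₀ ^ n := fun n => (hnormp n).trans (hCb n)
    have h2pow : Tendsto (fun k : ℕ => (2:ℝ) ^ k) atTop atTop :=
      tendsto_pow_atTop_atTop_of_one_lt one_lt_two
    filter_upwards [h2pow.eventually_ge_atTop (2 * C), eventually_ge_atTop 1] with k hk2C hk1
    have hub : ∀ v ∈ K,
        (‖iteratedFDeriv ℝ k f v‖ / (k.factorial : ℝ)) ^ (1 / (k : ℝ)) ≤ δ / 2 := by
      intro v hv
      have hd : ‖iteratedFDeriv ℝ k f v‖ = ‖iteratedFDeriv ℝ k fh v‖ :=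
        (ι.norm_iteratedFDeriv_comp_left (x := v) hf.contDiffAt (by exact_mod_cast le_top)).symm
      have hεv : ε₀ * ‖v‖ ≤ 1 / 4 := by
        have h1 : ε₀ ≤ 1 / (4 * (R + 1)) := min_le_right _ _
        have h2 : ‖v‖ ≤ R := hR v hv
        have h3 : 0 ≤ ‖v‖ := norm_nonneg v
        have h4 : ε₀ * ‖v‖ ≤ (1 / (4 * (R + 1))) * R :=
          mul_le_mul h1 h2 h3 (by positivity)
        refine h4.trans ?_
        rw [div_mul_eq_mul_div, div_le_div_iff₀ (by positivity) (by norm_num)]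
        nlinarith
      have hb := aux2 hps (by linarith : (0:ℝ) ≤ C) hε₀pos.le hqb k hεv
      have hkfac : (0:ℝ) < (k.factorial : ℝ) := by exact_mod_cast k.factorial_pos
      have h3 : ‖iteratedFDeriv ℝ k f v‖ / (k.factorial : ℝ) ≤ 2 * C * (2 * ε₀) ^ k := by
        rw [hd, div_le_iff₀ hkfac]
        calc ‖iteratedFDeriv ℝ k fh v‖ ≤ 2 * (C * k.factorial * (2 * ε₀) ^ k) := hb
          _ = 2 * C * (2 * ε₀) ^ k * (k.factorial : ℝ) := by ring
      calc (‖iteratedFDeriv ℝ k f v‖ / (k.factorial : ℝ)) ^ (1 / (k : ℝ))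
          ≤ (2 * C * (2 * ε₀) ^ k) ^ (1 / (k : ℝ)) :=
            Real.rpow_le_rpow (by positivity) h3 (by positivity)
        _ = (2 * C) ^ (1 / (k : ℝ)) * (2 * ε₀) := by
            rw [Real.mul_rpow (by linarith) (by positivity), one_div,
              Real.pow_rpow_inv_natCast (by positivity) (by omega)]
        _ ≤ 2 * (2 * ε₀) := by
            refine mul_le_mul_of_nonneg_right ?_ (by positivity)
            calc (2 * C) ^ (1 / (k:ℝ)) ≤ ((2:ℝ) ^ k) ^ (1 / (k:ℝ)) :=
                  Real.rpow_le_rpow (by linarith) hk2C (by positivity)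
              _ = 2 := by rw [one_div, Real.pow_rpow_inv_natCast (by norm_num) (by omega)]
        _ ≤ δ / 2 := by
            have : ε₀ ≤ δ / 8 := min_le_left _ _
            linarith
    have hnn : 0 ≤ sSup ((fun v =>
        (‖iteratedFDeriv ℝ k f v‖ / (k.factorial : ℝ)) ^ (1 / (k : ℝ))) '' K) := by
      apply Real.sSup_nonneg
      rintro x ⟨v, hv, rfl⟩
      positivity
    have hle : sSup ((fun v =>
        (‖iteratedFDeriv ℝ k f v‖ / (k.factorial : ℝ)) ^ (1 / (k : ℝ))) '' K) ≤ δ / 2 := by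
      apply Real.sSup_le
      · rintro x ⟨v, hv, rfl⟩
        exact hub v hv
      · linarith
    rw [Real.norm_of_nonneg hnn]
    linarith
  · intro H
    have Hpt : Tendsto (fun k : ℕ =>
        (‖iteratedFDeriv ℝ k f 0‖ / (k.factorial : ℝ)) ^ (1 / (k : ℝ))) atTop (nhds 0) := by
      have h := H {0} isCompact_singleton
      simpa [Set.image_singleton] using h
    refine ⟨fun k => symmetrize ((k.factorial : ℝ)⁻¹ • iteratedFDeriv ℝ k f 0),
      fun k σ v => symmetrize_apply_perm _ σ v, ?_, ?_⟩
    · intro v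
      set g : ℕ → W := fun k => ((k.factorial : ℝ)⁻¹ • iteratedFDeriv ℝ k f 0) (fun _ => v)
        with hg
      have hAg : (fun k => symmetrize ((k.factorial : ℝ)⁻¹ • iteratedFDeriv ℝ k f 0)
          (fun _ => v)) = g := funext fun k => symmetrize_apply_diag _ v
      have hps := taylor_conv f hf H v
      have hnorm : ∀ k, ‖g k‖ ≤ (‖iteratedFDeriv ℝ k f 0‖ / (k.factorial : ℝ)) * ‖v‖ ^ k := by
        intro k
        have h1 : ‖g k‖ ≤ ‖(k.factorial : ℝ)⁻¹ • iteratedFDeriv ℝ k f 0‖ * ‖v‖ ^ k := by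
          simpa [Finset.prod_const, hg] using
            ((k.factorial : ℝ)⁻¹ • iteratedFDeriv ℝ k f 0).le_opNorm fun _ => v
        refine h1.trans ?_
        exact mul_le_mul_of_nonneg_right (norm_inv_fact_smul_le _) (by positivity)
      obtain ⟨C, hC1, hCb⟩ := root_decay_bound
        (c := fun k => ‖iteratedFDeriv ℝ k f 0‖ / (k.factorial : ℝ))
        (fun k => by positivity) Hpt (ε := 1 / (2 * (‖v‖ + 1))) (by positivity)
      have hmaj : ∀ k, ‖g k‖ ≤ C * (1/2 : ℝ) ^ k := by
        intro k
        refine (hnorm k).trans ?_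
        calc (‖iteratedFDeriv ℝ k f 0‖ / (k.factorial : ℝ)) * ‖v‖ ^ k
            ≤ (C * (1 / (2 * (‖v‖ + 1))) ^ k) * ‖v‖ ^ k :=
              mul_le_mul_of_nonneg_right (hCb k) (by positivity)
          _ = C * ((‖v‖ / (2 * (‖v‖ + 1))) ^ k) := by
              rw [mul_assoc, ← mul_pow]; ring_nf
          _ ≤ C * ((1/2 : ℝ) ^ k) := by
              refine mul_le_mul_of_nonneg_left (pow_le_pow_left₀ (by positivity) ?_ k)
                (by linarith)
              rw [div_le_div_iff₀ (by positivity) (by norm_num)]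
              nlinarith [norm_nonneg v]
      have hsml : Summable (fun k => C * (1/2 : ℝ) ^ k) :=
        (summable_geometric_of_lt_one (by norm_num : (0:ℝ) ≤ 1/2) (by norm_num)).mul_left C
      have hcauchy : CauchySeq (fun s : Finset ℕ => ∑ k ∈ s, g k) :=
        cauchySeq_finset_of_norm_bounded hsml hmaj
      have hfin : Tendsto ((fun s : Finset ℕ => ∑ k ∈ s, g k) ∘ Finset.range) atTop
          (nhds (f v)) := hps
      have hHs : HasSum g (f v) :=
        tendsto_nhds_of_cauchySeq_of_subseq hcauchy tendsto_finset_range hfin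
      rw [show (fun k => (fun k => symmetrize ((k.factorial : ℝ)⁻¹ • iteratedFDeriv ℝ k f 0)) k
        fun _ => v) = g from hAg]
      exact hHs
    · apply squeeze_zero' (Eventually.of_forall fun k => Real.rpow_nonneg (norm_nonneg _) _)
        (Eventually.of_forall fun k => ?_) Hpt
      refine Real.rpow_le_rpow (norm_nonneg _) ?_ (by positivity)
      exact (norm_symmetrize_le _).trans (norm_inv_fact_smul_le _)
end

section
/- Let $\{H_m\}_{m \ge 0}$ be the probabilist's Hermite polynomials and $\epsilon \in \mathbb{R}^d$ a standard Gaussian vector. For $a: V \to \mathbb{R}^d$ linear and the recursively defined multilinear forms $\hat{H}_0(\epsilon; a) = 1$, $\hat{H}_m(\epsilon;a)(u_1,\dots,u_m) = a(u_m)^\top(\epsilon - \nabla_\epsilon)\hat{H}_{m-1}(\epsilon;a)(u_1,\dots,u_{m-1})$, one has for all $u \in V$: $\hat{H}_m(\epsilon; a)(u^{\otimes m}) = \|a(u)\|_2^m \, H_m\left(\epsilon^\top \widehat{a(u)}\right)$, where $\widehat{x} = x/\|x\|_2$. -/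
open scoped RealInnerProductSpace

lemma fderiv_eval_inner {d : ℕ} (q : Polynomial ℝ) (v : EuclideanSpace ℝ (Fin d)) (c : ℝ)
    (ε w : EuclideanSpace ℝ (Fin d)) :
    fderiv ℝ (fun x => q.eval (⟪x, v⟫ / c)) ε w
      = q.derivative.eval (⟪ε, v⟫ / c) * (⟪w, v⟫ / c) := by
  set L : EuclideanSpace ℝ (Fin d) →L[ℝ] ℝ := c⁻¹ • (innerSL ℝ v) with hLdef
  have hL : ∀ x, L x = ⟪x, v⟫ / c := by
    intro x
    simp only [hLdef, ContinuousLinearMap.smul_apply, innerSL_apply_apply, smul_eq_mul]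
    rw [real_inner_comm]
    ring
  have hfun : (fun x : EuclideanSpace ℝ (Fin d) => q.eval (⟪x, v⟫ / c))
      = (fun y => q.eval y) ∘ L := by
    funext x; simp [hL]
  have h1 : HasFDerivAt ((fun y => q.eval y) ∘ L)
      (q.derivative.eval (⟪ε, v⟫ / c) • L) ε := by
    have h2 := (q.hasDerivAt (L ε)).comp_hasFDerivAt ε L.hasFDerivAt
    rwa [hL ε] at h2
  rw [hfun, h1.fderiv, ContinuousLinearMap.smul_apply, hL w, smul_eq_mul]


/-- The recursively defined multilinear forms
`Ĥ₀(ε;a) = 1`,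
`Ĥ_m(ε;a)(u₁,…,u_m) = a(u_m)ᵀ(ε - ∇_ε) Ĥ_{m-1}(ε;a)(u₁,…,u_{m-1})`. -/
noncomputable def hHat {V : Type*} [NormedAddCommGroup V] [NormedSpace ℝ V] {d : ℕ}
    (a : V →ₗ[ℝ] EuclideanSpace ℝ (Fin d)) :
    (m : ℕ) → (Fin m → V) → EuclideanSpace ℝ (Fin d) → ℝ
  | 0, _, _ => 1
  | m + 1, u, ε =>
      ⟪a (u (Fin.last m)), ε⟫ * hHat a m (u ∘ Fin.castSucc) ε -
        fderiv ℝ (hHat a m (u ∘ Fin.castSucc)) ε (a (u (Fin.last m)))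

/-- Evaluated on the diagonal `u^{⊗m}`, the form `Ĥ_m` is a rescaled probabilist's
Hermite polynomial: `Ĥ_m(ε;a)(u^{⊗m}) = ‖a(u)‖^m · H_m(εᵀ·(a(u)/‖a(u)‖))`. -/
theorem hHat_diagonal_eq_hermite {V : Type*} [NormedAddCommGroup V] [NormedSpace ℝ V]
    {d : ℕ} (a : V →ₗ[ℝ] EuclideanSpace ℝ (Fin d)) (u : V) (m : ℕ)
    (ε : EuclideanSpace ℝ (Fin d)) :
    hHat a m (fun _ => u) ε =
      ‖a u‖ ^ m * Polynomial.aeval (⟪ε, a u⟫ / ‖a u‖) (Polynomial.hermite m) := by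
  by_cases h0 : a u = 0
  · cases m with
    | zero => simp [hHat]
    | succ m => simp [hHat, h0]
  · set c : ℝ := ‖a u‖ with hcdef
    have hc : c ≠ 0 := by simpa [hcdef] using h0
    have key : ∀ (m : ℕ) (ε : EuclideanSpace ℝ (Fin d)),
        hHat a m (fun _ => u) ε =
          (Polynomial.C (c ^ m) *
            (Polynomial.hermite m).map (Int.castRingHom ℝ)).eval (⟪ε, a u⟫ / c) := by
      intro m
      induction m with
      | zero => intro ε; simp [hHat]
      | succ m ih =>
        intro ε
        have hfe : hHat a m (fun _ => u) =
            fun x => (Polynomial.C (c ^ m) *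
              (Polynomial.hermite m).map (Int.castRingHom ℝ)).eval (⟪x, a u⟫ / c) :=
          funext ih
        show ⟪a u, ε⟫ * hHat a m (fun _ => u) ε -
            fderiv ℝ (hHat a m (fun _ => u)) ε (a u) = _
        rw [hfe, fderiv_eval_inner]
        beta_reduce
        rw [real_inner_comm (a u) ε, real_inner_self_eq_norm_sq, ← hcdef]
        obtain ⟨x, hx⟩ : ∃ x, ⟪a u, ε⟫ = c * x := ⟨⟪a u, ε⟫ / c, by field_simp⟩
        rw [hx, mul_div_cancel_left₀ _ hc]
        rw [Polynomial.hermite_succ, Polynomial.map_sub, Polynomial.map_mul,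
          Polynomial.map_X, ← Polynomial.derivative_map, Polynomial.derivative_C_mul]
        simp only [Polynomial.eval_mul, Polynomial.eval_sub, Polynomial.eval_C,
          Polynomial.eval_X]
        have hcc : c ^ 2 / c = c := by field_simp [sq]
        rw [hcc]
        ring
    rw [key m ε]
    simp [Polynomial.aeval_def, Polynomial.eval₂_eq_eval_map, algebraMap_int_eq]
end

section
/- Let $\Gamma$ denote the gamma function and let $T \ge 1$, $m \ge 0$ be integers. Then $\sum_{\substack{m_1 + \cdots + m_T = m \\ m_t \ge 0}} \prod_{t=1}^T \frac{c^{m_t}}{\sqrt{m_t!}} \le \binom{m+T-1}{m} \frac{c^m}{\sqrt{\Gamma(m/T + 1)}}$ for every $c > 0$, and consequently the left-hand side raised to the power $1/m$ tends to $0$ as $m \to \infty$ (for fixed $T$ and $c$). -/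
open Finset

private lemma sqrt_prod_aux {ι : Type*} (s : Finset ι) (f : ι → ℝ) (h : ∀ i ∈ s, 0 ≤ f i) :
    Real.sqrt (∏ i ∈ s, f i) = ∏ i ∈ s, Real.sqrt (f i) := by
  induction s using Finset.cons_induction with
  | empty => simp
  | cons a s ha ih =>
    rw [Finset.prod_cons, Finset.prod_cons, Real.sqrt_mul (h a (Finset.mem_cons_self a s)),
      ih (fun i hi => h i (Finset.mem_cons.2 (Or.inr hi)))]

private lemma card_adt (T m : ℕ) :
    (Finset.Nat.antidiagonalTuple T m).card = (m + T - 1).choose m := by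
  classical
  rw [← Finset.piAntidiag_univ_fin_eq_antidiagonalTuple m T, ← Finset.map_sym_eq_piAntidiag,
    Finset.card_map, Finset.sym_univ, Finset.card_univ, Sym.card_sym_eq_choose, Fintype.card_fin,
    Nat.add_comm]

private lemma choose_le_two_pow_aux (n k : ℕ) : n.choose k ≤ 2 ^ n := by
  rcases le_or_gt k n with h | h
  · calc n.choose k ≤ ∑ i ∈ Finset.range (n + 1), n.choose i :=
        Finset.single_le_sum (fun i _ => Nat.zero_le _) (Finset.mem_range.2 (by omega))
      _ = 2 ^ n := Nat.sum_range_choose n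
  · rw [Nat.choose_eq_zero_of_lt h]; positivity

private lemma gamma_le_aux (T : ℕ) (hT : 1 ≤ T) (m : ℕ) (f : Fin T → ℕ)
    (hf : ∑ t, f t = m) :
    Real.Gamma ((m : ℝ) / T + 1) ≤ ((∏ t, (f t).factorial : ℕ) : ℝ) := by
  have hT0 : (0 : ℝ) < T := by exact_mod_cast hT
  have hPpos : 0 < ∏ t, (f t).factorial := Finset.prod_pos fun t _ => (f t).factorial_pos
  have hprod1 : (1 : ℝ) ≤ ((∏ t, (f t).factorial : ℕ) : ℝ) := by exact_mod_cast hPpos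
  have hx : (0 : ℝ) < (m : ℝ) / T + 1 := by positivity
  have hΓpos : 0 < Real.Gamma ((m : ℝ) / T + 1) := Real.Gamma_pos_of_pos hx
  rcases le_or_gt (Real.Gamma ((m : ℝ) / T + 1)) 1 with hΓ | hΓ
  · linarith
  · -- Jensen for log ∘ Γ
    have hjen := Real.convexOn_log_Gamma.map_sum_le (t := Finset.univ)
      (w := fun _ : Fin T => 1 / (T : ℝ)) (p := fun t => (f t : ℝ) + 1)
      (fun _ _ => by positivity)
      (by
        rw [Finset.sum_const, Finset.card_univ, Fintype.card_fin, nsmul_eq_mul]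
        field_simp)
      (fun t _ => by
        simp only [Set.mem_Ioi]; positivity)
    have harg : ∑ t, (1 / (T : ℝ)) • ((f t : ℝ) + 1) = (m : ℝ) / T + 1 := by
      simp only [smul_eq_mul, ← Finset.mul_sum]
      have hs : ∑ t, ((f t : ℝ) + 1) = (m : ℝ) + T := by
        rw [Finset.sum_add_distrib, Finset.sum_const, Finset.card_univ, Fintype.card_fin]
        push_cast [← hf]
        ring
      rw [hs]
      field_simp
    rw [harg] at hjen
    have hrhs : ∑ t, (1 / (T : ℝ)) • (Real.log ∘ Real.Gamma) ((f t : ℝ) + 1)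
        = (1 / (T : ℝ)) * Real.log ((∏ t, (f t).factorial : ℕ) : ℝ) := by
      push_cast [Nat.cast_prod]
      rw [Real.log_prod (fun t _ => by
        exact_mod_cast (f t).factorial_pos.ne')]
      simp only [smul_eq_mul, Function.comp_apply, ← Finset.mul_sum]
      congr 1
      refine Finset.sum_congr rfl fun t _ => ?_
      rw [Real.Gamma_nat_eq_factorial]
    rw [hrhs] at hjen
    have hlog : Real.log (Real.Gamma ((m : ℝ) / T + 1) ^ T)
        ≤ Real.log ((∏ t, (f t).factorial : ℕ) : ℝ) := by
      rw [Real.log_pow]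
      simp only [Function.comp_apply] at hjen
      calc (T : ℝ) * Real.log (Real.Gamma ((m : ℝ) / T + 1))
          ≤ (T : ℝ) * ((1 / (T : ℝ)) * Real.log ((∏ t, (f t).factorial : ℕ) : ℝ)) := by
            have := mul_le_mul_of_nonneg_left hjen hT0.le
            simpa using this
        _ = Real.log ((∏ t, (f t).factorial : ℕ) : ℝ) := by field_simp
    have hpowle : Real.Gamma ((m : ℝ) / T + 1) ^ T ≤ ((∏ t, (f t).factorial : ℕ) : ℝ) :=
      (Real.log_le_log_iff (by positivity) (by linarith)).1 hlog
    calc Real.Gamma ((m : ℝ) / T + 1) ≤ Real.Gamma ((m : ℝ) / T + 1) ^ T :=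
          le_self_pow₀ hΓ.le (by omega)
      _ ≤ _ := hpowle

private lemma fact_le_aux (T : ℕ) (hT : 1 ≤ T) (m : ℕ) (f : Fin T → ℕ)
    (hf : ∑ t, f t = m) :
    ((m + T - 1) / T).factorial ≤ ∏ t, (f t).factorial := by
  have hne : (Finset.univ : Finset (Fin T)).Nonempty := ⟨⟨0, hT⟩, Finset.mem_univ _⟩
  obtain ⟨t0, -, ht0⟩ : ∃ t ∈ Finset.univ, m ≤ T * f t := by
    refine Finset.exists_le_of_sum_le hne ?_
    rw [← Finset.mul_sum, hf, Finset.sum_const, Finset.card_univ, Fintype.card_fin,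
      smul_eq_mul, mul_comm]
  have hq : (m + T - 1) / T ≤ f t0 := by
    have h1 : m + T - 1 ≤ T * f t0 + (T - 1) := by omega
    calc (m + T - 1) / T ≤ (T * f t0 + (T - 1)) / T := Nat.div_le_div_right h1
      _ = f t0 + (T - 1) / T := Nat.mul_add_div (by omega) _ _
      _ = f t0 := by rw [Nat.div_eq_of_lt (by omega), add_zero]
  calc ((m + T - 1) / T).factorial ≤ (f t0).factorial := Nat.factorial_le hq
    _ ≤ ∏ t, (f t).factorial :=
      Finset.single_le_prod' (f := fun t => (f t).factorial) (fun t _ => (f t).factorial_pos) (Finset.mem_univ t0)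

private lemma sum_le_gen (T m : ℕ) (hT : 1 ≤ T) (c : ℝ) (hc : 0 < c) (D : ℝ) (hD : 0 < D)
    (h : ∀ f ∈ Finset.Nat.antidiagonalTuple T m, D ≤ ((∏ t, (f t).factorial : ℕ) : ℝ)) :
    ∑ f ∈ Finset.Nat.antidiagonalTuple T m,
        ∏ t : Fin T, c ^ f t / Real.sqrt ((f t).factorial)
      ≤ ((m + T - 1).choose m : ℝ) * (c ^ m / Real.sqrt D) := by
  have hstep : ∀ f ∈ Finset.Nat.antidiagonalTuple T m,
      ∏ t : Fin T, c ^ f t / Real.sqrt ((f t).factorial) ≤ c ^ m / Real.sqrt D := by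
    intro f hf
    have hfm : ∑ t, f t = m := Finset.Nat.mem_antidiagonalTuple.mp hf
    have heq : ∏ t : Fin T, c ^ f t / Real.sqrt ((f t).factorial)
        = c ^ m / Real.sqrt ((∏ t, (f t).factorial : ℕ) : ℝ) := by
      rw [Finset.prod_div_distrib, Finset.prod_pow_eq_pow_sum, hfm, Nat.cast_prod,
        sqrt_prod_aux _ _ (fun t _ => by positivity)]
    rw [heq]
    gcongr
    exact h f hf
  calc ∑ f ∈ Finset.Nat.antidiagonalTuple T m,
        ∏ t : Fin T, c ^ f t / Real.sqrt ((f t).factorial)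
      ≤ ∑ _f ∈ Finset.Nat.antidiagonalTuple T m, c ^ m / Real.sqrt D :=
        Finset.sum_le_sum hstep
    _ = ((m + T - 1).choose m : ℝ) * (c ^ m / Real.sqrt D) := by
        rw [Finset.sum_const, card_adt, nsmul_eq_mul]

/-- The multinomial-type bound
`∑_{m₁+⋯+m_T = m} ∏_t c^{m_t}/√(m_t!) ≤ (m+T-1 choose m) · c^m / √Γ(m/T + 1)`
(which follows from the convexity of `log Γ`), and consequently the left-hand side
raised to the power `1/m` tends to `0` as `m → ∞`, establishing super-exponential
decay of Taylor coefficients. -/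
theorem composition_sum_factorial_bound (T : ℕ) (hT : 1 ≤ T) (c : ℝ) (hc : 0 < c) :
    (∀ m : ℕ,
        ∑ f ∈ Finset.Nat.antidiagonalTuple T m,
            ∏ t : Fin T, c ^ f t / Real.sqrt ((f t).factorial) ≤
          ((m + T - 1).choose m : ℝ) * c ^ m /
            Real.sqrt (Real.Gamma ((m : ℝ) / T + 1))) ∧
      Filter.Tendsto (fun m : ℕ =>
          (∑ f ∈ Finset.Nat.antidiagonalTuple T m,
              ∏ t : Fin T, c ^ f t / Real.sqrt ((f t).factorial)) ^ (1 / (m : ℝ)))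
        Filter.atTop (nhds 0) := by
  constructor
  · intro m
    have hD : 0 < Real.Gamma ((m : ℝ) / T + 1) := Real.Gamma_pos_of_pos (by positivity)
    have := sum_le_gen T m hT c hc _ hD
      (fun f hf => gamma_le_aux T hT m f (Finset.Nat.mem_antidiagonalTuple.mp hf))
    rwa [← mul_div_assoc] at this
  · have hS0 : ∀ m : ℕ, 0 ≤ ∑ f ∈ Finset.Nat.antidiagonalTuple T m,
        ∏ t : Fin T, c ^ f t / Real.sqrt ((f t).factorial) := fun m =>
      Finset.sum_nonneg fun f _ => Finset.prod_nonneg fun t _ => by positivity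
    have key : ∀ m : ℕ, ∑ f ∈ Finset.Nat.antidiagonalTuple T m,
        ∏ t : Fin T, c ^ f t / Real.sqrt ((f t).factorial)
        ≤ ((m + T - 1).choose m : ℝ) * (c ^ m / Real.sqrt (((m + T - 1) / T).factorial)) := by
      intro m
      refine sum_le_gen T m hT c hc _ (by positivity) fun f hf => ?_
      exact_mod_cast Nat.cast_le.2
        (fact_le_aux T hT m f (Finset.Nat.mem_antidiagonalTuple.mp hf))
    have hq : Filter.Tendsto (fun m : ℕ => (m + T - 1) / T) Filter.atTop Filter.atTop := by
      refine Filter.tendsto_atTop_atTop.2 fun b => ⟨b * T, fun m hm => ?_⟩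
      rw [Nat.le_div_iff_mul_le (by omega : 0 < T)]
      omega
    rw [NormedAddCommGroup.tendsto_nhds_zero]
    intro ε hε
    obtain ⟨δ, hδ, hδlt⟩ : ∃ δ : ℝ, 0 < δ ∧ δ < ε := ⟨ε / 2, by positivity, by linarith⟩
    set K : ℝ := max 1 ((2 * c / δ) ^ 2) with hKdef
    have hK1 : (1 : ℝ) ≤ K := le_max_left _ _
    set A : ℝ := (2 : ℝ) ^ (2 * T) with hAdef
    have hA : 0 < A := by positivity
    have hev : ∀ᶠ n in Filter.atTop, A * (K ^ T) ^ n < (n.factorial : ℝ) := by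
      have hB := FloorSemiring.tendsto_pow_div_factorial_atTop (K := ℝ) (K ^ T)
      filter_upwards [hB.eventually (eventually_lt_nhds (show (0 : ℝ) < A⁻¹ by positivity))]
        with n hn
      have hn! : (0 : ℝ) < (n.factorial : ℝ) := by exact_mod_cast n.factorial_pos
      rw [div_lt_iff₀ hn!] at hn
      calc A * (K ^ T) ^ n < A * (A⁻¹ * (n.factorial : ℝ)) := by
            have hKTn : (0 : ℝ) ≤ (K ^ T) ^ n := by positivity
            exact mul_lt_mul_of_pos_left hn hA
        _ = (n.factorial : ℝ) := by field_simp
    filter_upwards [hq.eventually hev, Filter.eventually_ge_atTop 1] with m hm hm1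
    have hTq : m ≤ T * ((m + T - 1) / T) := by
      have hdm := Nat.div_add_mod (m + T - 1) T
      have hmod : (m + T - 1) % T < T := Nat.mod_lt _ (by omega)
      omega
    have hKm : ((2 * c / δ) ^ 2) ^ m ≤ (K ^ T) ^ ((m + T - 1) / T) := by
      calc ((2 * c / δ) ^ 2) ^ m ≤ K ^ m :=
            pow_le_pow_left₀ (by positivity) (le_max_right _ _) m
        _ ≤ K ^ (T * ((m + T - 1) / T)) := pow_le_pow_right₀ hK1 hTq
        _ = (K ^ T) ^ ((m + T - 1) / T) := by rw [← pow_mul]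
    have hfq : (0 : ℝ) < (((m + T - 1) / T).factorial : ℝ) := by
      exact_mod_cast ((m + T - 1) / T).factorial_pos
    have hsq : (0 : ℝ) < Real.sqrt (((m + T - 1) / T).factorial) := Real.sqrt_pos.2 hfq
    have hX : (2 : ℝ) ^ (m + T) * c ^ m / δ ^ m
        ≤ Real.sqrt (((m + T - 1) / T).factorial) := by
      rw [Real.le_sqrt (by positivity) hfq.le]
      have h1 : (2 : ℝ) ^ (m + T) * c ^ m / δ ^ m = 2 ^ T * (2 * c / δ) ^ m := by
        rw [pow_add]
        field_simp
        rw [div_pow, mul_div_assoc', mul_div_cancel_left₀ _ (pow_ne_zero m hδ.ne')]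
        ring
      have habs : ∀ a : ℝ, ((2 : ℝ) ^ T * a ^ m) ^ 2 = A * (a ^ 2) ^ m := by
        intro a
        rw [hAdef]
        ring
      have hexp : ((2 : ℝ) ^ (m + T) * c ^ m / δ ^ m) ^ 2 = A * ((2 * c / δ) ^ 2) ^ m := by
        rw [h1, habs]
      rw [hexp]
      calc A * ((2 * c / δ) ^ 2) ^ m ≤ A * (K ^ T) ^ ((m + T - 1) / T) := by
            exact mul_le_mul_of_nonneg_left hKm hA.le
        _ ≤ (((m + T - 1) / T).factorial : ℝ) := hm.le
    have hchoose : (((m + T - 1).choose m : ℕ) : ℝ) ≤ (2 : ℝ) ^ (m + T) := by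
      calc (((m + T - 1).choose m : ℕ) : ℝ) ≤ ((2 ^ (m + T - 1) : ℕ) : ℝ) := by
            exact_mod_cast choose_le_two_pow_aux (m + T - 1) m
        _ = (2 : ℝ) ^ (m + T - 1) := by push_cast; ring
        _ ≤ (2 : ℝ) ^ (m + T) := pow_le_pow_right₀ one_le_two (by omega)
    have hSm : ∑ f ∈ Finset.Nat.antidiagonalTuple T m,
        ∏ t : Fin T, c ^ f t / Real.sqrt ((f t).factorial) ≤ δ ^ m := by
      have h2 : (2 : ℝ) ^ (m + T) * c ^ m
          ≤ Real.sqrt (((m + T - 1) / T).factorial) * δ ^ m :=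
        (div_le_iff₀ (by positivity)).1 hX
      calc ∑ f ∈ Finset.Nat.antidiagonalTuple T m,
            ∏ t : Fin T, c ^ f t / Real.sqrt ((f t).factorial)
          ≤ ((m + T - 1).choose m : ℝ)
            * (c ^ m / Real.sqrt (((m + T - 1) / T).factorial)) := key m
        _ ≤ (2 : ℝ) ^ (m + T) * (c ^ m / Real.sqrt (((m + T - 1) / T).factorial)) := by
            gcongr
        _ = ((2 : ℝ) ^ (m + T) * c ^ m) / Real.sqrt (((m + T - 1) / T).factorial) := by
            rw [mul_div_assoc]
        _ ≤ δ ^ m := by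
            rw [div_le_iff₀ hsq]
            linarith [h2]
    have hpow : (∑ f ∈ Finset.Nat.antidiagonalTuple T m,
        ∏ t : Fin T, c ^ f t / Real.sqrt ((f t).factorial)) ^ (1 / (m : ℝ)) ≤ δ := by
      have hm0 : ((m : ℝ)) ≠ 0 := by exact_mod_cast (by omega : m ≠ 0)
      have h := Real.rpow_le_rpow (hS0 m) hSm (by positivity : (0 : ℝ) ≤ 1 / (m : ℝ))
      rwa [← Real.rpow_natCast δ m, ← Real.rpow_mul hδ.le, mul_one_div_cancel hm0,
        Real.rpow_one] at h
    rw [Real.norm_eq_abs, abs_of_nonneg (Real.rpow_nonneg (hS0 m) _)]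
    calc (∑ f ∈ Finset.Nat.antidiagonalTuple T m,
        ∏ t : Fin T, c ^ f t / Real.sqrt ((f t).factorial)) ^ (1 / (m : ℝ))
        ≤ δ := hpow
      _ < ε := hδlt
end
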